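/- Let α_n be the effective resistance across the first rung of the ladder graph P_2 □ P_n (i.e., between vertices (1,1) and (2,1)). Then the sequence (α_n) is strictly decreasing, satisfies α_n > √3 − 1 for all n ≥ 1, and converges to √3 − 1 as n → ∞. -/

import Mathlib

/-!
The effective resistance `ω_{x,y}` equals `v x - v y` for any potential `v` with
`L v = e_x - e_y`, so it suffices to exhibit one. On the ladder, opposite potentials `±u_k` on the
two sides reduce `L v = e_{(1,1)} - e_{(2,1)}` to `(L_{P_n} + 2) u = c e_1`, which is solved by
`u_k = r_{n+1-k}` with `r = 1, 1, 3, 11, 41, …`, `r_{m+2} = 4 r_{m+1} - r_m`. Hence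
`α_n = 2 r_n / (3 r_n - r_{n-1})`, `α_1 = 1` and `α_{n+1} = f α_n` with `f x = (2 + x) / (3 + x)`.
Since `f x - (√3 - 1) = (2 - √3) (x - (√3 - 1)) / (3 + x)`, starting from `α_1 = 1 > √3 - 1` the
iterates stay above `√3 - 1` and approach it at least by a factor `3` per step.
-/

open Classical Matrix

/-- The four Penrose conditions characterizing the Moore–Penrose pseudoinverse
of a real square matrix. -/
def IsMoorePenroseInverse {V : Type*} [Fintype V] [DecidableEq V]
    (L P : Matrix V V ℝ) : Prop :=
  L * P * L = L ∧ P * L * P = P ∧ (L * P)ᵀ = L * P ∧ (P * L)ᵀ = P * L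

/-- The Moore–Penrose pseudoinverse of a real square matrix. -/
noncomputable def pinv {V : Type*} [Fintype V] [DecidableEq V]
    (L : Matrix V V ℝ) : Matrix V V ℝ :=
  if h : ∃ P, IsMoorePenroseInverse L P then h.choose else 0

/-- Effective resistance between `x` and `y` computed from a (weighted) Laplacian `L`. -/
noncomputable def effResM {V : Type*} [Fintype V] [DecidableEq V]
    (L : Matrix V V ℝ) (x y : V) : ℝ :=
  pinv L x x + pinv L y y - 2 * pinv L x y

/-- Effective resistance between vertices `x` and `y` of a simple graph `G`. -/
noncomputable def effRes {V : Type*} [Fintype V] [DecidableEq V]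
    (G : SimpleGraph V) (x y : V) : ℝ :=
  effResM (G.lapMatrix ℝ) x y

/-- The node resistance curvature `p_x = 1 - (1/2) ∑_{y ~ x} ω_{x,y}`. -/
noncomputable def curv {V : Type*} [Fintype V] [DecidableEq V]
    (G : SimpleGraph V) (x : V) : ℝ :=
  1 - (1/2) * ∑ y : V, if G.Adj x y then effRes G x y else 0

/-- The grid graph `P_m □ P_n` (vertex `(i,j)` of the paper corresponds to
`(⟨i-1⟩, ⟨j-1⟩) : Fin m × Fin n`). -/
def grid (m n : ℕ) : SimpleGraph (Fin m × Fin n) :=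
  (SimpleGraph.pathGraph m).boxProd (SimpleGraph.pathGraph n)

/-- The ladder graph `P_2 □ P_n` (vertex `(i,k)` of the paper corresponds to
`(⟨i-1⟩, ⟨k-1⟩) : Fin 2 × Fin n`). -/
def ladder (n : ℕ) : SimpleGraph (Fin 2 × Fin n) :=
  (SimpleGraph.pathGraph 2).boxProd (SimpleGraph.pathGraph n)

/-- `α_n`, the effective resistance across the first rung of the ladder `P_2 □ P_n`,
i.e. between the vertices `(1,1)` and `(2,1)` of the paper (junk value `0` for `n = 0`). -/
noncomputable def alpha (n : ℕ) : ℝ :=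
  if h : 0 < n then effRes (ladder n) (0, ⟨0, h⟩) (1, ⟨0, h⟩) else 0


theorem Fin.sum_univ_ite_val_eq {R : Type*} [AddCommMonoid R] (n m : ℕ) (f : ℕ → R) :
    ∑ l : Fin n, (if m = (l : ℕ) then f l else 0) = if m < n then f m else 0 := by
  rw [Fin.sum_univ_eq_sum_range (fun l => if m = l then f l else 0), Finset.sum_ite_eq]
  simp only [Finset.mem_range]

namespace IsMoorePenroseInverse

variable {V : Type*} [Fintype V] [DecidableEq V] {L P Q : Matrix V V ℝ}

theorem unique (hP : IsMoorePenroseInverse L P) (hQ : IsMoorePenroseInverse L Q) : P = Q := by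
  obtain ⟨p1, p2, p3, p4⟩ := hP
  obtain ⟨q1, q2, q3, q4⟩ := hQ
  have hLP : L * P = L * Q :=
    calc L * P = (L * Q * (L * P))ᵀ := by rw [← Matrix.mul_assoc, q1, p3]
      _ = L * P * (L * Q) := by rw [transpose_mul, p3, q3]
      _ = L * Q := by rw [← Matrix.mul_assoc, p1]
  have hPL : P * L = Q * L :=
    calc P * L = (P * L * (Q * L))ᵀ := by rw [Matrix.mul_assoc, ← Matrix.mul_assoc L, q1, p4]
      _ = Q * L * (P * L) := by rw [transpose_mul, p4, q4]
      _ = Q * L := by rw [Matrix.mul_assoc, ← Matrix.mul_assoc L, p1]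
  calc P = P * L * P := p2.symm
    _ = Q * L * Q := by rw [hPL, Matrix.mul_assoc, hLP, ← Matrix.mul_assoc]
    _ = Q := q2

theorem transpose (h : IsMoorePenroseInverse L P) : IsMoorePenroseInverse Lᵀ Pᵀ := by
  obtain ⟨h1, h2, h3, h4⟩ := h
  refine ⟨?_, ?_, ?_, ?_⟩
  · simpa only [transpose_mul, Matrix.mul_assoc] using congrArg Matrix.transpose h1
  · simpa only [transpose_mul, Matrix.mul_assoc] using congrArg Matrix.transpose h2
  · rw [← transpose_mul, h4]; exact h4
  · rw [← transpose_mul, h3]; exact h3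

theorem transpose_eq_self (hL : Lᵀ = L) (h : IsMoorePenroseInverse L P) : Pᵀ = P :=
  (hL ▸ h.transpose).unique h

theorem pinv_eq (h : IsMoorePenroseInverse L P) : pinv L = P := by
  have hex : ∃ P, IsMoorePenroseInverse L P := ⟨P, h⟩
  rw [pinv, dif_pos hex]
  exact hex.choose_spec.unique h

end IsMoorePenroseInverse

section

variable {V : Type*} [Fintype V] [DecidableEq V]

theorem isMoorePenroseInverse_inv_add_sub {L K : Matrix V V ℝ} (hdet : IsUnit (L + K).det)
    (hLK : L * K = 0) (hKL : K * L = 0) (hKK : K * K = K) (hKt : Kᵀ = K) :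
    IsMoorePenroseInverse L ((L + K)⁻¹ - K) := by
  set M := L + K
  have hMK : M * K = K := by rw [add_mul, hLK, hKK, zero_add]
  have hKM : K * M = K := by rw [mul_add, hKL, hKK, zero_add]
  have hiK : M⁻¹ * K = K := by
    conv_lhs => rw [← hMK, ← Matrix.mul_assoc, Matrix.nonsing_inv_mul M hdet, Matrix.one_mul]
  have hKi : K * M⁻¹ = K := by
    conv_lhs => rw [← hKM, Matrix.mul_assoc, Matrix.mul_nonsing_inv M hdet, Matrix.mul_one]
  have hL : L = M - K := by simp [M]
  have hLP : L * (M⁻¹ - K) = 1 - K := by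
    rw [hL, Matrix.sub_mul, Matrix.mul_sub, Matrix.mul_sub, Matrix.mul_nonsing_inv M hdet, hMK,
      hKi, hKK]
    abel
  have hPL : (M⁻¹ - K) * L = 1 - K := by
    rw [hL, Matrix.sub_mul, Matrix.mul_sub, Matrix.mul_sub, Matrix.nonsing_inv_mul M hdet, hiK,
      hKM, hKK]
    abel
  have hKP : K * (M⁻¹ - K) = 0 := by rw [Matrix.mul_sub, hKi, hKK, sub_self]
  refine ⟨?_, ?_, ?_, ?_⟩
  · rw [hLP, Matrix.sub_mul, Matrix.one_mul, hKL, sub_zero]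
  · rw [hPL, Matrix.sub_mul, Matrix.one_mul, hKP, sub_zero]
  · rw [hLP, transpose_sub, transpose_one, hKt]
  · rw [hPL, transpose_sub, transpose_one, hKt]

theorem effResM_eq_sub_of_mulVec_eq {L P : Matrix V V ℝ} (hL : Lᵀ = L)
    (hP : IsMoorePenroseInverse L P) {x y : V} {v : V → ℝ}
    (hv : L *ᵥ v = Pi.single x 1 - Pi.single y 1) : effResM L x y = v x - v y := by
  set δ : V → ℝ := Pi.single x 1 - Pi.single y 1
  have hPyx : P y x = P x y := congrFun (congrFun (hP.transpose_eq_self hL) x) y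
  have hquad : δ ⬝ᵥ (P *ᵥ δ) = P x x + P y y - 2 * P x y := by
    simp only [δ, Matrix.mulVec_sub, Matrix.mulVec_single_one, sub_dotProduct, dotProduct_sub,
      single_dotProduct, Matrix.col_apply, one_mul, hPyx]
    ring
  -- `δᵀ P δ = vᵀ L P L v = vᵀ L v = vᵀ δ`
  have hpot : δ ⬝ᵥ (P *ᵥ δ) = v x - v y := by
    rw [← hv, Matrix.mulVec_mulVec, ← Matrix.vecMul_transpose, hL, ← Matrix.dotProduct_mulVec,
      Matrix.mulVec_mulVec, ← Matrix.mul_assoc, hP.1, hv]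
    simp [δ, dotProduct_sub, dotProduct_single]
  rw [effResM, hP.pinv_eq, ← hquad, hpot]

end

namespace SimpleGraph.Connected

variable {V : Type*} [Fintype V] [DecidableEq V] {G : SimpleGraph V}

/-- The pseudoinverse of the Laplacian is `(L + J/|V|)⁻¹ - J/|V|`, `J` the all-ones matrix. -/
theorem exists_isMoorePenroseInverse_lapMatrix (hG : G.Connected) :
    ∃ P, IsMoorePenroseInverse (G.lapMatrix ℝ) P := by
  set L := G.lapMatrix ℝ
  have hLt : Lᵀ = L := G.isSymm_lapMatrix ℝ
  have hcard : (Fintype.card V : ℝ) ≠ 0 := by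
    have := hG.nonempty
    exact_mod_cast Fintype.card_ne_zero
  set K : Matrix V V ℝ := Matrix.of fun _ _ => (Fintype.card V : ℝ)⁻¹
  have hKt : Kᵀ = K := rfl
  have hKv (w : V → ℝ) (i : V) : (K *ᵥ w) i = (Fintype.card V : ℝ)⁻¹ * ∑ j, w j := by
    simp [K, Matrix.mulVec, dotProduct, Finset.mul_sum]
  have hLK : L * K = 0 := by
    ext i j
    have := congrFun (G.lapMatrix_mulVec_const_eq_zero (R := ℝ)) i
    simp only [Matrix.mulVec, dotProduct, mul_one] at this
    simp [K, Matrix.mul_apply, ← Finset.sum_mul, L, this]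
  have hKL : K * L = 0 := by
    simpa only [transpose_mul, hKt, hLt, transpose_zero] using congrArg Matrix.transpose hLK
  have hKK : K * K = K := by
    ext i j
    simp only [K, Matrix.mul_apply, of_apply, Finset.sum_const, Finset.card_univ, nsmul_eq_mul]
    field_simp
  have hdet : IsUnit (L + K).det := by
    rw [isUnit_iff_ne_zero]
    intro h0
    obtain ⟨w, hw0, hw⟩ := Matrix.exists_mulVec_eq_zero_iff.2 h0
    have hKw : K *ᵥ w = 0 := by
      simpa [Matrix.mulVec_mulVec, mul_add, hKL, hKK] using congrArg (K *ᵥ ·) hw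
    have hLw : L *ᵥ w = 0 := by simpa [Matrix.add_mulVec, hKw] using hw
    have hconst (i j : V) : w i = w j :=
      G.lapMatrix_mulVec_eq_zero_iff_forall_reachable.1 hLw i j (hG.preconnected i j)
    refine hw0 (funext fun i => ?_)
    have := hKv w i
    simp only [hKw, Finset.sum_congr rfl fun j _ => hconst j i] at this
    simpa [hcard] using this.symm
  exact ⟨_, isMoorePenroseInverse_inv_add_sub hdet hLK hKL hKK hKt⟩

theorem effRes_eq_sub_of_lapMatrix_mulVec_eq (hG : G.Connected) {x y : V} {v : V → ℝ}
    (hv : G.lapMatrix ℝ *ᵥ v = Pi.single x 1 - Pi.single y 1) : effRes G x y = v x - v y :=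
  have ⟨_, hP⟩ := hG.exists_isMoorePenroseInverse_lapMatrix
  effResM_eq_sub_of_mulVec_eq (G.isSymm_lapMatrix ℝ) hP hv

end SimpleGraph.Connected

namespace SimpleGraph

variable {R : Type*} [CommRing R]

theorem lapMatrix_mulVec_apply_eq_sum_ite {V : Type*} [Fintype V] [DecidableEq V]
    (G : SimpleGraph V) [DecidableRel G.Adj] (v : V → R) (x : V) :
    (G.lapMatrix R *ᵥ v) x = ∑ y, if G.Adj x y then v x - v y else 0 := by
  rw [lapMatrix_mulVec_apply, degree_eq_sum_if_adj, neighborFinset_eq_filter, Finset.sum_filter,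
    Finset.sum_mul, ← Finset.sum_sub_distrib]
  refine Finset.sum_congr rfl fun y _ => ?_
  split_ifs <;> simp

theorem lapMatrix_boxProd_mulVec_mul {α β : Type*} [Fintype α] [Fintype β] [DecidableEq α]
    [DecidableEq β] (G : SimpleGraph α) (H : SimpleGraph β) [DecidableRel G.Adj]
    [DecidableRel H.Adj] [DecidableRel (G □ H).Adj] (a : α → R) (b : β → R) (x : α × β) :
    ((G □ H).lapMatrix R *ᵥ fun z => a z.1 * b z.2) x =
      (G.lapMatrix R *ᵥ a) x.1 * b x.2 + a x.1 * (H.lapMatrix R *ᵥ b) x.2 := by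
  simp only [lapMatrix_mulVec_apply, degree_boxProd, neighborFinset_boxProd, Finset.sum_disjUnion,
    Finset.sum_product, Finset.sum_singleton, ← Finset.sum_mul, ← Finset.mul_sum]
  push_cast
  ring

theorem pathGraph_lapMatrix_mulVec_apply (n : ℕ) (u : ℕ → R) (k : Fin n) :
    ((pathGraph n).lapMatrix R *ᵥ fun l => u l) k =
      (if k + 1 < n then u k - u (k + 1) else 0) +
        (if 0 < (k : ℕ) then u k - u (k - 1) else 0) := by
  have hsplit (l : Fin n) : (if (pathGraph n).Adj k l then u k - u l else 0) =
      (if (k : ℕ) + 1 = l then u k - u l else 0) + (if (k : ℕ) = l + 1 then u k - u l else 0) := by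
    rw [pathGraph_adj]
    by_cases h1 : (k : ℕ) + 1 = l <;> by_cases h2 : (k : ℕ) = l + 1 <;> simp [h1, h2] <;> omega
  rw [lapMatrix_mulVec_apply_eq_sum_ite]
  simp only [hsplit, Finset.sum_add_distrib]
  rw [Fin.sum_univ_ite_val_eq n (k + 1) fun l => u k - u l]
  congr 1
  obtain ⟨_ | m, hm⟩ := k
  · simp
  · simp only [add_left_inj, Nat.add_sub_cancel, Nat.zero_lt_succ, if_true]
    rw [Fin.sum_univ_ite_val_eq n m fun l => u (m + 1) - u l, if_pos (by omega)]

theorem pathGraph_two_lapMatrix_mulVec_sign (i : Fin 2) :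
    ((pathGraph 2).lapMatrix R *ᵥ ![1, -1]) i = 2 * ![(1 : R), -1] i := by
  rw [lapMatrix_mulVec_apply_eq_sum_ite]
  fin_cases i <;> simp [Fin.sum_univ_two, pathGraph_adj] <;> ring

end SimpleGraph

/-- `1, 1, 3, 11, 41, …`: the potential along one side of a ladder of length `n`, read from its far
end, when the two sides carry opposite potentials. -/
noncomputable def ladderSeq : ℕ → ℝ
  | 0 => 1
  | 1 => 1
  | n + 2 => 4 * ladderSeq (n + 1) - ladderSeq n

theorem one_le_ladderSeq_and_le_succ (n : ℕ) :
    1 ≤ ladderSeq n ∧ ladderSeq n ≤ ladderSeq (n + 1) := by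
  induction n with
  | zero => simp [ladderSeq]
  | succ m ih =>
    refine ⟨by linarith, ?_⟩
    rw [ladderSeq]
    linarith

theorem two_mul_ladderSeq_le (n : ℕ) : 2 * ladderSeq n ≤ 3 * ladderSeq n - ladderSeq (n - 1) := by
  obtain _ | m := n
  · norm_num [ladderSeq]
  · rw [Nat.add_sub_cancel]
    linarith [(one_le_ladderSeq_and_le_succ m).2]

theorem pathGraph_lapMatrix_mulVec_ladderSeq (n : ℕ) (k : Fin n) :
    ((SimpleGraph.pathGraph n).lapMatrix ℝ *ᵥ fun l => ladderSeq (n - l)) k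
        + 2 * ladderSeq (n - k) =
      if (k : ℕ) = 0 then 3 * ladderSeq n - ladderSeq (n - 1) else 0 := by
  rw [SimpleGraph.pathGraph_lapMatrix_mulVec_apply n (fun m => ladderSeq (n - m)) k]
  obtain ⟨k, hk⟩ := k
  dsimp only
  rcases Nat.eq_zero_or_pos k with rfl | hk0
  · by_cases h1 : 1 < n
    · simp only [zero_add, h1, lt_irrefl, if_true, if_false, Nat.sub_zero]
      ring
    · obtain rfl : n = 1 := by omega
      norm_num [ladderSeq]
  · simp only [hk0, hk0.ne', if_true, if_false]
    by_cases h1 : k + 1 < n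
    · obtain ⟨p, hp⟩ : ∃ p, n - k = p + 1 := ⟨n - k - 1, by omega⟩
      rw [if_pos h1, hp, show n - (k + 1) = p by omega, show n - (k - 1) = p + 2 by omega,
        ladderSeq]
      ring
    · rw [if_neg h1, show n - k = 1 by omega, show n - (k - 1) = 2 by omega]
      norm_num [ladderSeq]

theorem ladder_lapMatrix_mulVec (n : ℕ) (hn : 0 < n) :
    (ladder n).lapMatrix ℝ *ᵥ (fun z => ![1, -1] z.1 * ladderSeq (n - z.2)) =
      (3 * ladderSeq n - ladderSeq (n - 1)) •
        (Pi.single (0, ⟨0, hn⟩) 1 - Pi.single (1, ⟨0, hn⟩) 1) := by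
  funext ⟨i, k⟩
  rw [ladder, SimpleGraph.lapMatrix_boxProd_mulVec_mul _ _ ![1, -1]
    fun l : Fin n => ladderSeq (n - l), SimpleGraph.pathGraph_two_lapMatrix_mulVec_sign]
  calc _ = ![1, -1] i * (((SimpleGraph.pathGraph n).lapMatrix ℝ *ᵥ fun l => ladderSeq (n - l)) k
        + 2 * ladderSeq (n - k)) := by ring
    _ = _ := by
      rw [pathGraph_lapMatrix_mulVec_ladderSeq]
      fin_cases i <;> by_cases hk : (k : ℕ) = 0 <;>
        simp [hk, Pi.single_apply, Prod.ext_iff, Fin.ext_iff]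

theorem ladder_connected (n : ℕ) (hn : 0 < n) : (ladder n).Connected := by
  obtain ⟨m, rfl⟩ : ∃ m, n = m + 1 := ⟨n - 1, by omega⟩
  exact (SimpleGraph.pathGraph_connected 1).boxProd (SimpleGraph.pathGraph_connected m)

theorem alpha_eq_ladderSeq (n : ℕ) (hn : 0 < n) :
    alpha n = 2 * ladderSeq n / (3 * ladderSeq n - ladderSeq (n - 1)) := by
  set D := 3 * ladderSeq n - ladderSeq (n - 1)
  have hD : D ≠ 0 := by linarith [two_mul_ladderSeq_le n, (one_le_ladderSeq_and_le_succ n).1]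
  rw [alpha, dif_pos hn, (ladder_connected n hn).effRes_eq_sub_of_lapMatrix_mulVec_eq
    (v := D⁻¹ • fun z => ![1, -1] z.1 * ladderSeq (n - z.2))]
  · simp only [Pi.smul_apply, smul_eq_mul, cons_val_zero, cons_val_one, cons_val_fin_one,
      tsub_zero, one_mul, neg_mul, div_eq_inv_mul]
    ring
  · rw [Matrix.mulVec_smul, ladder_lapMatrix_mulVec n hn, smul_smul, inv_mul_cancel₀ hD, one_smul]

theorem alpha_one : alpha 1 = 1 := by
  norm_num [alpha_eq_ladderSeq, ladderSeq]

/-- Gluing one more square onto the ladder: the old first rung now sits in series with two edges,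
and in parallel with the new rung. -/
theorem alpha_succ (n : ℕ) (hn : 0 < n) : alpha (n + 1) = (2 + alpha n) / (3 + alpha n) := by
  obtain ⟨m, rfl⟩ : ∃ m, n = m + 1 := ⟨n - 1, by omega⟩
  set x := ladderSeq (m + 1)
  set y := ladderSeq m
  have hx : 1 ≤ x := (one_le_ladderSeq_and_le_succ (m + 1)).1
  have hxy : y ≤ x := (one_le_ladderSeq_and_le_succ m).2
  have h1 : alpha (m + 1) = 2 * x / (3 * x - y) := alpha_eq_ladderSeq (m + 1) hn
  have h2 : alpha (m + 2) = 2 * (4 * x - y) / (3 * (4 * x - y) - x) :=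
    alpha_eq_ladderSeq (m + 2) (by omega)
  have hD1 : 3 * x - y ≠ 0 := by linarith
  have hD2 : 3 * (4 * x - y) - x ≠ 0 := by linarith
  have hD3 : 3 * (3 * x - y) + 2 * x ≠ 0 := by linarith
  rw [h2, h1, add_div' _ _ _ hD1, add_div' _ _ _ hD1, div_div_div_cancel_right₀ hD1,
    div_eq_div_iff hD2 hD3]
  ring

section RungRecursion

open Real Filter Topology

theorem one_lt_sqrt_three : 1 < √3 := by
  rw [lt_sqrt zero_le_one]; norm_num

theorem sqrt_three_lt_two : √3 < 2 := by
  rw [sqrt_lt' two_pos]; norm_num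

theorem two_add_div_three_add_sub (x : ℝ) (hx : 3 + x ≠ 0) :
    (2 + x) / (3 + x) - (√3 - 1) = (2 - √3) * (x - (√3 - 1)) / (3 + x) := by
  rw [eq_div_iff hx, sub_mul, div_mul_cancel₀ _ hx]
  linear_combination -sq_sqrt (zero_le_three : (0 : ℝ) ≤ 3)

variable {a : ℕ → ℝ}

theorem sqrt_three_sub_one_lt_of_recursion (ha : ∀ m, a (m + 1) = (2 + a m) / (3 + a m))
    (h0 : √3 - 1 < a 0) (m : ℕ) : √3 - 1 < a m := by
  induction m with
  | zero => exact h0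
  | succ m ih =>
    have hden : 0 < 3 + a m := by linarith [one_lt_sqrt_three]
    have := two_add_div_three_add_sub (a m) hden.ne'
    rw [← ha] at this
    have : 0 < (2 - √3) * (a m - (√3 - 1)) / (3 + a m) :=
      div_pos (mul_pos (by linarith [sqrt_three_lt_two]) (by linarith)) hden
    linarith

theorem recursion_sub_le (ha : ∀ m, a (m + 1) = (2 + a m) / (3 + a m))
    (h0 : √3 - 1 < a 0) (m : ℕ) : a (m + 1) - (√3 - 1) ≤ (a m - (√3 - 1)) / 3 := by
  have hm := sqrt_three_sub_one_lt_of_recursion ha h0 m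
  have hden : 0 < 3 + a m := by linarith [one_lt_sqrt_three]
  rw [ha, two_add_div_three_add_sub (a m) hden.ne', div_le_div_iff₀ hden three_pos]
  nlinarith [one_lt_sqrt_three]

theorem strictAnti_of_recursion (ha : ∀ m, a (m + 1) = (2 + a m) / (3 + a m))
    (h0 : √3 - 1 < a 0) : StrictAnti a :=
  strictAnti_nat_of_succ_lt fun m => by
    linarith [recursion_sub_le ha h0 m, sqrt_three_sub_one_lt_of_recursion ha h0 m]

theorem tendsto_of_recursion (ha : ∀ m, a (m + 1) = (2 + a m) / (3 + a m))
    (h0 : √3 - 1 < a 0) : Tendsto a atTop (𝓝 (√3 - 1)) := by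
  have hgeom (m : ℕ) : a m ≤ √3 - 1 + (a 0 - (√3 - 1)) * (1 / 3) ^ m := by
    induction m with
    | zero => simp
    | succ m ih =>
      rw [pow_succ]
      linarith [recursion_sub_le ha h0 m]
  have hlim : Tendsto (fun m => √3 - 1 + (a 0 - (√3 - 1)) * (1 / 3 : ℝ) ^ m) atTop
      (𝓝 (√3 - 1)) := by
    simpa using (tendsto_pow_atTop_nhds_zero_of_lt_one (by norm_num : (0 : ℝ) ≤ 1 / 3)
      (by norm_num)).const_mul (a 0 - (√3 - 1)) |>.const_add (√3 - 1)
  exact tendsto_of_tendsto_of_tendsto_of_le_of_le tendsto_const_nhds hlim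
    (fun m => (sqrt_three_sub_one_lt_of_recursion ha h0 m).le) hgeom

end RungRecursion

theorem alpha_anti_and_tendsto :
    (∀ n : ℕ, 1 ≤ n → alpha (n + 1) < alpha n) ∧
    (∀ n : ℕ, 1 ≤ n → Real.sqrt 3 - 1 < alpha n) ∧
    Filter.Tendsto alpha Filter.atTop (nhds (Real.sqrt 3 - 1)) := by
  set a : ℕ → ℝ := fun m => alpha (m + 1)
  have ha (m : ℕ) : a (m + 1) = (2 + a m) / (3 + a m) := alpha_succ (m + 1) m.succ_pos
  have h0 : Real.sqrt 3 - 1 < a 0 := by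
    simp only [a, zero_add, alpha_one]
    linarith [sqrt_three_lt_two]
  refine ⟨fun n hn => ?_, fun n hn => ?_,
    (Filter.tendsto_add_atTop_iff_nat 1).1 (tendsto_of_recursion ha h0)⟩
  · obtain ⟨m, rfl⟩ := Nat.exists_eq_add_of_le' hn
    exact strictAnti_of_recursion ha h0 m.lt_succ_self
  · obtain ⟨m, rfl⟩ := Nat.exists_eq_add_of_le' hn
    exact sqrt_three_sub_one_lt_of_recursion ha h0 m
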